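/- Let q ≥ 1 and a_1,…,a_q, b_1,…,b_q > 0 with e_i(b) ≥ e_i(a) for all i and the chain e_q(b)/e_q(a) ≥ ⋯ ≥ e_1(b)/e_1(a) ≥ 1. Let σ > 0 and f_1 = ∏ a_i/b_i. Then for 0 ≤ x < 1, (1 − f_1 x)^{−σ} ≤ {q+1}F{q}(σ,a;b;x) ≤ 1 − f_1 + f_1 (1−x)^{−σ}. -/

import Mathlib

open Finset Real MeasureTheory

noncomputable def rise (a : ℝ) (n : ℕ) : ℝ := ∏ k ∈ Finset.range n, (a + k)

noncomputable def esym {q : ℕ} (k : ℕ) (a : Fin q → ℝ) : ℝ :=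
  ∑ s ∈ Finset.powersetCard k (Finset.univ : Finset (Fin q)), ∏ i ∈ s, a i

/-!
Write `f_n = ∏ (a_i)_n / (b_i)_n`, so that `f_{n+1} = f_n ρ_n` with
`ρ_n = ∏ (a_i + n) / ∏ (b_i + n)`. Expanding both products in elementary symmetric
polynomials, `e_i(a) ≤ e_i(b)` gives `ρ_n ≤ 1`, and the chain
`e_i(b)/e_i(a) ≤ e_q(b)/e_q(a)` gives `ρ_n ≥ e_q(a)/e_q(b) = f_1`. Hence
`f_1^n ≤ f_n ≤ f_1` for `n ≥ 1`, and comparing the series termwise with the binomial series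
`∑ (σ)_n y^n / n! = (1 - y)^{-σ}` at `y = f_1 x` and at `y = x` yields both bounds.
-/

lemma rise_succ (a : ℝ) (n : ℕ) : rise a (n + 1) = rise a n * (a + n) :=
  prod_range_succ _ _

lemma rise_pos {a : ℝ} (ha : 0 < a) (n : ℕ) : 0 < rise a n :=
  prod_pos fun k _ => by positivity

lemma rise_eq_ascPochhammer_eval (a : ℝ) (n : ℕ) : rise a n = (ascPochhammer ℝ n).eval a := by
  induction n with
  | zero => simp [rise]
  | succ n ih => rw [rise_succ, ih, ascPochhammer_succ_eval]

lemma rise_eq_factorial_mul_choose (a : ℝ) (n : ℕ) :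
    rise a n = n.factorial * Ring.choose (a + n - 1) n := by
  rw [← Ring.multichoose_eq, ← nsmul_eq_mul, Ring.factorial_nsmul_multichoose_eq_ascPochhammer,
    Polynomial.ascPochhammer_smeval_cast, Polynomial.ascPochhammer_smeval_eq_eval,
    rise_eq_ascPochhammer_eval]

lemma hasSum_rise_mul_pow_div_factorial (σ : ℝ) {y : ℝ} (hy : |y| < 1) :
    HasSum (fun n => rise σ n * y ^ n / n.factorial) ((1 - y) ^ (-σ)) := by
  have h := (Real.one_div_one_sub_rpow_hasFPowerSeriesOnBall_zero σ).hasSum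
    (y := y) (by simpa [enorm_eq_nnnorm, ← NNReal.coe_lt_coe] using hy)
  rw [FormalMultilinearSeries.ofScalars_apply_eq', zero_add, one_div,
    ← Real.rpow_neg (by linarith [le_abs_self y])] at h
  refine h.congr_fun fun n => ?_
  rw [rise_eq_factorial_mul_choose, smul_eq_mul]
  field_simp

section WeightedBinomialSeries

variable {σ x : ℝ} {c : ℕ → ℝ}

lemma summable_rise_mul_mul_pow_div_factorial (hσ : 0 < σ) (hx0 : 0 ≤ x) (hx1 : x < 1)
    (hc0 : ∀ n, 0 ≤ c n) (hc1 : ∀ n, c n ≤ 1) :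
    Summable fun n => rise σ n * c n * x ^ n / n.factorial := by
  have hW := hasSum_rise_mul_pow_div_factorial σ (abs_lt.2 ⟨by linarith, hx1⟩)
  refine hW.summable.of_nonneg_of_le (fun n => ?_) fun n => ?_ <;> have := rise_pos hσ n
  · have := hc0 n
    positivity
  · rw [mul_right_comm, mul_div_right_comm]
    exact mul_le_of_le_one_right (by positivity) (hc1 n)

lemma rpow_neg_le_tsum_rise_mul_mul_pow_div_factorial {r : ℝ} (hσ : 0 < σ) (hx0 : 0 ≤ x)
    (hr : 0 ≤ r) (hrx : r * x < 1) (hc : ∀ n, r ^ n ≤ c n)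
    (hs : Summable fun n => rise σ n * c n * x ^ n / n.factorial) :
    (1 - r * x) ^ (-σ) ≤ ∑' n, rise σ n * c n * x ^ n / n.factorial := by
  have hL := hasSum_rise_mul_pow_div_factorial σ
    (abs_lt.2 ⟨by linarith [mul_nonneg hr hx0], hrx⟩)
  refine hL.tsum_eq ▸ hL.summable.tsum_le_tsum (fun n => ?_) hs
  have := rise_pos hσ n
  rw [mul_pow, ← mul_assoc]
  gcongr
  exact hc n

lemma tsum_rise_mul_mul_pow_div_factorial_le (hσ : 0 < σ) (hx0 : 0 ≤ x) (hx1 : x < 1)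
    (hc : Antitone c) (hc0 : c 0 = 1)
    (hs : Summable fun n => rise σ n * c n * x ^ n / n.factorial) :
    ∑' n, rise σ n * c n * x ^ n / n.factorial ≤ 1 - c 1 + c 1 * (1 - x) ^ (-σ) := by
  have hW := hasSum_rise_mul_pow_div_factorial σ (abs_lt.2 ⟨by linarith, hx1⟩)
  have hW1 : HasSum (fun n => c 1 * (rise σ (n + 1) * x ^ (n + 1) / (n + 1).factorial))
      (c 1 * ((1 - x) ^ (-σ) - 1)) := by
    simpa [rise] using ((hasSum_nat_add_iff' 1).2 hW).mul_left (c 1)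
  have hterm : ∀ n, rise σ (n + 1) * c (n + 1) * x ^ (n + 1) / (n + 1).factorial
      ≤ c 1 * (rise σ (n + 1) * x ^ (n + 1) / (n + 1).factorial) := fun n => by
    have := rise_pos hσ (n + 1)
    rw [mul_div_assoc', ← mul_assoc, mul_comm (c 1)]
    gcongr
    exact hc (by omega)
  calc ∑' n, rise σ n * c n * x ^ n / n.factorial
      = 1 + ∑' n, rise σ (n + 1) * c (n + 1) * x ^ (n + 1) / (n + 1).factorial := by
        rw [hs.tsum_eq_zero_add, hc0]; simp [rise]
    _ ≤ 1 + c 1 * ((1 - x) ^ (-σ) - 1) := by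
        gcongr
        exact hW1.tsum_eq ▸ ((summable_nat_add_iff 1).2 hs).tsum_le_tsum hterm hW1.summable
    _ = 1 - c 1 + c 1 * (1 - x) ^ (-σ) := by ring

end WeightedBinomialSeries

section SymmetricFunctions

variable {q : ℕ}

lemma esym_zero (a : Fin q → ℝ) : esym 0 a = 1 := by
  simp [esym]

lemma esym_self (a : Fin q → ℝ) : esym q a = ∏ i, a i := by
  have h : powersetCard q (univ : Finset (Fin q)) = {univ} := by
    simpa using powersetCard_self (univ : Finset (Fin q))
  rw [esym, h, sum_singleton]

lemma esym_pos {k : ℕ} (hk : k ≤ q) {a : Fin q → ℝ} (ha : ∀ i, 0 < a i) : 0 < esym k a :=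
  sum_pos (fun s _ => prod_pos fun i _ => ha i) (powersetCard_nonempty.2 (by simpa using hk))

lemma prod_add_eq_sum_esym_mul_pow (a : Fin q → ℝ) (t : ℝ) :
    ∏ i, (a i + t) = ∑ k ∈ range (q + 1), esym k a * t ^ (q - k) := by
  rw [prod_add, sum_powerset, card_univ, Fintype.card_fin]
  refine sum_congr rfl fun k _ => ?_
  rw [esym, sum_mul]
  refine sum_congr rfl fun s hs => ?_
  rw [prod_const, card_sdiff_of_subset (subset_univ s), card_univ, Fintype.card_fin,
    (mem_powersetCard.1 hs).2]

variable {a b : Fin q → ℝ}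

lemma prod_add_le_prod_add_of_esym_le (he : ∀ k, 1 ≤ k → k ≤ q → esym k a ≤ esym k b)
    {t : ℝ} (ht : 0 ≤ t) : ∏ i, (a i + t) ≤ ∏ i, (b i + t) := by
  rw [prod_add_eq_sum_esym_mul_pow, prod_add_eq_sum_esym_mul_pow]
  refine sum_le_sum fun k hk => ?_
  rcases k.eq_zero_or_pos with rfl | hk0
  · rw [esym_zero, esym_zero]
  · gcongr
    exact he k hk0 (Nat.lt_succ_iff.1 (mem_range.1 hk))

lemma esym_mul_esym_self_le_of_chain (ha : ∀ i, 0 < a i)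
    (hchain : ∀ k < q, esym k b / esym k a ≤ esym (k + 1) b / esym (k + 1) a)
    {k : ℕ} (hk : k ≤ q) : esym k b * esym q a ≤ esym q b * esym k a := by
  have hratio : esym k b / esym k a ≤ esym q b / esym q a :=
    Nat.decreasingInduction (motive := fun k _ => esym k b / esym k a ≤ esym q b / esym q a)
      (fun k hk ih => (hchain k hk).trans ih) le_rfl hk
  rwa [div_le_div_iff₀ (esym_pos hk ha) (esym_pos le_rfl ha)] at hratio

lemma esym_self_mul_prod_add_le_of_chain (ha : ∀ i, 0 < a i)
    (hchain : ∀ k < q, esym k b / esym k a ≤ esym (k + 1) b / esym (k + 1) a)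
    {t : ℝ} (ht : 0 ≤ t) : esym q a * ∏ i, (b i + t) ≤ esym q b * ∏ i, (a i + t) := by
  rw [prod_add_eq_sum_esym_mul_pow, prod_add_eq_sum_esym_mul_pow, mul_sum, mul_sum]
  refine sum_le_sum fun k hk => ?_
  have h := esym_mul_esym_self_le_of_chain ha hchain (Nat.lt_succ_iff.1 (mem_range.1 hk))
  calc esym q a * (esym k b * t ^ (q - k)) = esym k b * esym q a * t ^ (q - k) := by ring
    _ ≤ esym q b * esym k a * t ^ (q - k) := by gcongr
    _ = esym q b * (esym k a * t ^ (q - k)) := by ring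

end SymmetricFunctions

section HypergeometricCoefficients

variable {q : ℕ} {a b : Fin q → ℝ}

noncomputable def hypCoeff (a b : Fin q → ℝ) (n : ℕ) : ℝ :=
  (∏ i, rise (a i) n) / ∏ i, rise (b i) n

lemma hypCoeff_zero : hypCoeff a b 0 = 1 := by
  simp [hypCoeff, rise]

lemma hypCoeff_succ (n : ℕ) :
    hypCoeff a b (n + 1) = hypCoeff a b n * ((∏ i, (a i + n)) / ∏ i, (b i + n)) := by
  simp only [hypCoeff, rise_succ, prod_mul_distrib, mul_div_mul_comm]

lemma hypCoeff_one : hypCoeff a b 1 = ∏ i, a i / b i := by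
  rw [hypCoeff_succ, hypCoeff_zero, one_mul, prod_div_distrib]
  simp

lemma hypCoeff_pos (ha : ∀ i, 0 < a i) (hb : ∀ i, 0 < b i) (n : ℕ) : 0 < hypCoeff a b n :=
  div_pos (prod_pos fun i _ => rise_pos (ha i) n) (prod_pos fun i _ => rise_pos (hb i) n)

lemma prod_add_natCast_pos (hb : ∀ i, 0 < b i) (n : ℕ) : 0 < ∏ i, (b i + n) :=
  prod_pos fun i _ => by have := hb i; positivity

lemma hypCoeff_antitone (ha : ∀ i, 0 < a i) (hb : ∀ i, 0 < b i)
    (he : ∀ k, 1 ≤ k → k ≤ q → esym k a ≤ esym k b) : Antitone (hypCoeff a b) := by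
  refine antitone_nat_of_succ_le fun n => ?_
  rw [hypCoeff_succ]
  refine mul_le_of_le_one_right (hypCoeff_pos ha hb n).le ?_
  exact (div_le_one (prod_add_natCast_pos hb n)).2
    (prod_add_le_prod_add_of_esym_le he n.cast_nonneg)

lemma prod_div_pow_le_hypCoeff (ha : ∀ i, 0 < a i) (hb : ∀ i, 0 < b i)
    (hchain : ∀ k < q, esym k b / esym k a ≤ esym (k + 1) b / esym (k + 1) a) (n : ℕ) :
    (∏ i, a i / b i) ^ n ≤ hypCoeff a b n := by
  have hratio (m : ℕ) : ∏ i, a i / b i ≤ (∏ i, (a i + m)) / ∏ i, (b i + m) := by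
    rw [prod_div_distrib, ← esym_self, ← esym_self,
      div_le_div_iff₀ (esym_pos le_rfl hb) (prod_add_natCast_pos hb m)]
    exact (esym_self_mul_prod_add_le_of_chain ha hchain m.cast_nonneg).trans_eq
      (mul_comm _ _)
  induction n with
  | zero => rw [pow_zero, hypCoeff_zero]
  | succ n ih =>
    rw [pow_succ, hypCoeff_succ]
    have : 0 ≤ ∏ i, a i / b i := prod_nonneg fun i _ => (div_pos (ha i) (hb i)).le
    gcongr
    exacts [(hypCoeff_pos ha hb n).le, hratio n]

end HypergeometricCoefficients

theorem stmt12_general (q : ℕ) (a b : Fin q → ℝ)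
    (ha : ∀ i, 0 < a i) (hb : ∀ i, 0 < b i)
    (he : ∀ i : ℕ, 1 ≤ i → i ≤ q → esym i a ≤ esym i b)
    (hchain : ∀ i : ℕ, i < q → esym i b / esym i a ≤ esym (i + 1) b / esym (i + 1) a)
    (σ : ℝ) (hσ : 0 < σ) (x : ℝ) (hx0 : 0 ≤ x) (hx1 : x < 1) :
    (1 - (∏ i, a i / b i) * x) ^ (-σ)
      ≤ (∑' n : ℕ, rise σ n * ((∏ i, rise (a i) n) / (∏ i, rise (b i) n)) * x ^ n / (Nat.factorial n)) ∧
    (∑' n : ℕ, rise σ n * ((∏ i, rise (a i) n) / (∏ i, rise (b i) n)) * x ^ n / (Nat.factorial n))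
      ≤ 1 - (∏ i, a i / b i) + (∏ i, a i / b i) * (1 - x) ^ (-σ) := by
  have hanti := hypCoeff_antitone ha hb he
  have hle_one : ∀ n, hypCoeff a b n ≤ 1 := fun n =>
    (hanti n.zero_le).trans_eq hypCoeff_zero
  have hs := summable_rise_mul_mul_pow_div_factorial hσ hx0 hx1
    (fun n => (hypCoeff_pos ha hb n).le) hle_one
  have hlow : ∀ n, hypCoeff a b 1 ^ n ≤ hypCoeff a b n :=
    hypCoeff_one (a := a) ▸ prod_div_pow_le_hypCoeff ha hb hchain
  have hx : hypCoeff a b 1 * x < 1 := by nlinarith [hle_one 1]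
  rw [← hypCoeff_one]
  exact ⟨rpow_neg_le_tsum_rise_mul_mul_pow_div_factorial hσ hx0 (hypCoeff_pos ha hb 1).le hx
    hlow hs,
    tsum_rise_mul_mul_pow_div_factorial_le hσ hx0 hx1 hanti hypCoeff_zero hs⟩

theorem stmt12 (q : ℕ) (hq : 1 ≤ q) (a b : Fin q → ℝ)
    (ha : ∀ i, 0 < a i) (hb : ∀ i, 0 < b i)
    (he : ∀ i : ℕ, 1 ≤ i → i ≤ q → esym i a ≤ esym i b)
    (hchain : ∀ i : ℕ, i < q → esym i b / esym i a ≤ esym (i + 1) b / esym (i + 1) a)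
    (σ : ℝ) (hσ : 0 < σ) (x : ℝ) (hx0 : 0 ≤ x) (hx1 : x < 1) :
    (1 - (∏ i, a i / b i) * x) ^ (-σ)
      ≤ (∑' n : ℕ, rise σ n * ((∏ i, rise (a i) n) / (∏ i, rise (b i) n)) * x ^ n / (Nat.factorial n)) ∧
    (∑' n : ℕ, rise σ n * ((∏ i, rise (a i) n) / (∏ i, rise (b i) n)) * x ^ n / (Nat.factorial n))
      ≤ 1 - (∏ i, a i / b i) + (∏ i, a i / b i) * (1 - x) ^ (-σ) :=
  stmt12_general q a b ha hb he hchain σ hσ x hx0 hx1
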